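/- arXiv:2404.13626 — 2 statements merged into one kernel-verified Lean document; each statement's English description precedes it below -/
import Mathlib

section
/- Let α : ℝ → ℝ be monotone (order-preserving) with α(0) = 0, and let b : ℝ → ℝ be differentiable with b(0) ≥ 0 and deriv b t ≥ −α(b(t)) for all t ≥ 0. Then b(t) ≥ 0 for all t ≥ 0, i.e., the 0-superlevel set {b ≥ 0} is forward invariant. -/
/-- Forward invariance of the 0-superlevel set for a zeroing control barrier
function: if `α` is monotone with `α 0 = 0`, `b(0) ≥ 0` and
`ḃ(t) ≥ −α(b(t))` for all `t ≥ 0`, then `b(t) ≥ 0` for all `t ≥ 0`. -/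
theorem stmt_11 (α : ℝ → ℝ) (hα : Monotone α) (hα0 : α 0 = 0)
    (b : ℝ → ℝ) (hb : Differentiable ℝ b) (h0 : 0 ≤ b 0)
    (hd : ∀ t : ℝ, 0 ≤ t → deriv b t ≥ -α (b t)) :
    ∀ t : ℝ, 0 ≤ t → 0 ≤ b t := by
  intro t₁ ht₁
  by_contra hneg
  push_neg at hneg
  set A : Set ℝ := Set.Icc 0 t₁ ∩ b ⁻¹' Set.Ici 0 with hA
  have hA0 : (0 : ℝ) ∈ A := ⟨⟨le_refl 0, ht₁⟩, h0⟩
  have hAne : A.Nonempty := ⟨0, hA0⟩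
  have hAbdd : BddAbove A := ⟨t₁, fun x hx => hx.1.2⟩
  have hAclosed : IsClosed A :=
    isClosed_Icc.inter (isClosed_Ici.preimage hb.continuous)
  set s := sSup A with hs
  have hsA : s ∈ A := hAclosed.csSup_mem hAne hAbdd
  have hs0 : 0 ≤ s := hsA.1.1
  have hst : s ≤ t₁ := hsA.1.2
  have hbs : 0 ≤ b s := hsA.2
  have hlt : ∀ x ∈ Set.Ioo s t₁, b x < 0 := by
    intro x hx
    by_contra h
    push_neg at h
    have : x ∈ A := ⟨⟨hs0.trans hx.1.le, hx.2.le⟩, h⟩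
    exact absurd (le_csSup hAbdd this) (not_le.2 hx.1)
  have hmono : MonotoneOn b (Set.Icc s t₁) := by
    apply monotoneOn_of_deriv_nonneg (convex_Icc s t₁) hb.continuous.continuousOn
      (fun x _ => (hb x).differentiableWithinAt)
    intro x hx
    rw [interior_Icc] at hx
    have hx0 : 0 ≤ x := hs0.trans hx.1.le
    have hbx : b x < 0 := hlt x hx
    have : α (b x) ≤ 0 := hα0 ▸ hα hbx.le
    linarith [hd x hx0]
  have := hmono ⟨le_refl s, hst⟩ ⟨hst, le_refl t₁⟩ hst
  linarith
end

section
/- Let n : ℕ, and let a, d, c : Fin n → ℝ with a i > 0 for all i. Define x* : Fin n → ℝ by x*_i := max (c i) (−(d i)/(a i)). Then (1) x* is feasible: a i · x*_i + d i ≥ 0 for all i; (2) x* is the unique minimizer of ‖x − c‖² over the feasible set {x : Fin n → ℝ | ∀ i, a i · x i + d i ≥ 0}: for every feasible x ≠ x*, ‖x* − c‖² < ‖x − c‖². Moreover x*_i = c i exactly for those indices i where a i · c i + d i ≥ 0, and otherwise x*_i = c i + h i with correction h i = −(a i · c i + d i)/(a i) > 0. -/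
/-- Closed-form solution of the decoupled safety-critical quadratic program:
with componentwise affine constraints `a i * x i + d i ≥ 0` (`a i > 0`) and
nominal value `c`, the point `x* i = max (c i) (−d i / a i)` is feasible, is
the unique minimizer of `‖x − c‖²` over the feasible set, agrees with the
nominal `c` exactly on components where the nominal value is already safe,
and otherwise adds the strictly positive correction
`h i = −(a i * c i + d i) / a i`. -/
theorem stmt_12 (n : ℕ) (a d c : Fin n → ℝ) (ha : ∀ i, 0 < a i)
    (xstar : Fin n → ℝ) (hx : ∀ i, xstar i = max (c i) (-(d i) / a i)) :
    (∀ i, 0 ≤ a i * xstar i + d i) ∧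
    (∀ x : Fin n → ℝ, (∀ i, 0 ≤ a i * x i + d i) → x ≠ xstar →
      ∑ i, (xstar i - c i) ^ 2 < ∑ i, (x i - c i) ^ 2) ∧
    (∀ i, xstar i = c i ↔ 0 ≤ a i * c i + d i) ∧
    (∀ i, ¬(0 ≤ a i * c i + d i) →
      xstar i = c i + (-((a i * c i + d i) / a i)) ∧
      0 < -((a i * c i + d i) / a i)) := by
  have key : ∀ i (x : ℝ), 0 ≤ a i * x + d i →
      (xstar i - c i) ^ 2 ≤ (x - c i) ^ 2 ∧ (x ≠ xstar i → (xstar i - c i) ^ 2 < (x - c i) ^ 2) := by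
    intro i x hfeas
    have hai := ha i
    have hxge : -(d i) / a i ≤ x := by
      rw [div_le_iff₀ hai]
      nlinarith
    rcases le_or_gt (-(d i) / a i) (c i) with h | h
    · have hxs : xstar i = c i := by rw [hx i, max_eq_left h]
      constructor
      · rw [hxs]; simp; positivity
      · intro hne
        rw [hxs]
        have : x - c i ≠ 0 := by rw [hxs] at hne; intro h0; exact hne (by linarith)
        simp
        positivity
    · have hxs : xstar i = -(d i) / a i := by rw [hx i, max_eq_right h.le]
      have h1 : 0 < xstar i - c i := by rw [hxs]; linarith
      have h2 : xstar i - c i ≤ x - c i := by rw [hxs]; linarith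
      constructor
      · nlinarith
      · intro hne
        have : xstar i < x := by
          rw [hxs]
          rcases lt_or_eq_of_le hxge with h3 | h3
          · exact h3
          · exact absurd (h3.symm.trans hxs.symm) hne
        nlinarith
  refine ⟨?_, ?_, ?_, ?_⟩
  · intro i
    have hai := ha i
    have : -(d i) / a i ≤ xstar i := by rw [hx i]; exact le_max_right _ _
    rw [div_le_iff₀ hai] at this
    nlinarith
  · intro x hfeas hne
    have hex : ∃ j, x j ≠ xstar j := by
      by_contra hc
      push_neg at hc
      exact hne (funext hc)
    obtain ⟨j, hj⟩ := hex
    exact Finset.sum_lt_sum (fun i _ => (key i (x i) (hfeas i)).1)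
      ⟨j, Finset.mem_univ j, (key j (x j) (hfeas j)).2 hj⟩
  · intro i
    have hai := ha i
    constructor
    · intro heq
      have : -(d i) / a i ≤ c i := by
        rw [hx i] at heq
        by_contra hlt
        push_neg at hlt
        rw [max_eq_right hlt.le] at heq
        linarith [heq ▸ hlt]
      rw [div_le_iff₀ hai] at this
      nlinarith
    · intro hsafe
      rw [hx i, max_eq_left]
      rw [div_le_iff₀ hai]
      nlinarith
  · intro i hns
    push_neg at hns
    have hai := ha i
    have hlt : c i < -(d i) / a i := by
      rw [lt_div_iff₀ hai]; nlinarith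
    constructor
    · rw [hx i, max_eq_right hlt.le]
      field_simp
      ring
    · have : (a i * c i + d i) / a i < 0 := div_neg_of_neg_of_pos hns hai
      linarith
end
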